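/- arXiv:1201.6211 — 3 statements merged into one kernel-verified Lean document; each statement's English description precedes it below -/
import Mathlib

section
/- Suppose a = (1, -a_1, -a_2, …) satisfies Σ_{j≥1} (1+j)^r |a_j| < ∞ and the power series A(z) = 1 - Σ_{j=1}^∞ a_j z^j has no zeros in the closed unit disk {|z| ≤ 1}. Then there exists a sequence (α_j)_{j≥1} with Σ_{j≥1} (1+j)^r |α_j| < ∞ such that (1 - Σ_{j≥1} a_j z^j)^{-1} = 1 + Σ_{j≥1} α_j z^j for all |z| ≤ 1. -/
/-!
For a submultiplicative weight `w ≥ 1`, the power series `∑ cₙ Xⁿ` with `∑ w n ‖cₙ‖ < ∞` form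
a commutative Banach algebra `ℓ¹_w`, isometric to `ℓ¹` via `cₙ ↦ w n cₙ`. The monomials span a
dense subspace, so a character `φ` is evaluation of power series at `φ X`; since
`‖φ X‖ ^ n ≤ ‖Xⁿ‖ ‖1‖ = w n ‖1‖`, the GRS condition forces `‖φ X‖ ≤ 1`. Hence if `A` has no
zero on the closed unit disk, no character vanishes at `A`, so `A` is invertible in `ℓ¹_w` by
Gelfand theory; evaluation on the disk is multiplicative, so the inverse evaluates to `1 / A`.
-/

open Filter Topology Asymptotics PowerSeries Finset

lemma memℓp_one_iff_summable {g : ℕ → ℂ} : Memℓp g 1 ↔ Summable fun n => ‖g n‖ := by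
  rw [memℓp_gen_iff (by simp)]
  simp

structure SubmultiplicativeWeight where
  toFun : ℕ → ℝ
  one_le' : ∀ n, 1 ≤ toFun n
  map_add_le' : ∀ m n, toFun (m + n) ≤ toFun m * toFun n

namespace SubmultiplicativeWeight

instance : CoeFun SubmultiplicativeWeight fun _ => ℕ → ℝ := ⟨toFun⟩

variable (w : SubmultiplicativeWeight)

lemma one_le (n : ℕ) : 1 ≤ w n := w.one_le' n

lemma pos (n : ℕ) : 0 < w n := one_pos.trans_le (w.one_le n)

lemma map_add_le (m n : ℕ) : w (m + n) ≤ w m * w n := w.map_add_le' m n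

lemma mul_norm_nonneg (n : ℕ) (c : ℂ) : 0 ≤ w n * ‖c‖ :=
  mul_nonneg (w.pos n).le (norm_nonneg c)

lemma norm_ofReal_mul (n : ℕ) (c : ℂ) : ‖(w n : ℂ) * c‖ = w n * ‖c‖ := by
  rw [norm_mul, Complex.norm_real, Real.norm_of_nonneg (w.pos n).le]

/-- For weights `w ≥ 1` this is equivalent to the Gelfand–Raikov–Shilov condition
`w n ^ (1 / n) → 1`. -/
def IsGRS : Prop := ∀ t : ℝ, 1 < t → (fun n => w n) =o[atTop] fun n => t ^ n

lemma IsGRS.le_one_of_forall_pow_le {w : SubmultiplicativeWeight} (hw : w.IsGRS) {t C : ℝ}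
    (h : ∀ n, t ^ n ≤ C * w n) : t ≤ 1 := by
  by_contra! ht
  obtain ⟨n, hn⟩ := (((hw t ht).const_mul_left C).bound one_half_pos).exists
  have htn : 0 < t ^ n := pow_pos (one_pos.trans ht) n
  rw [Real.norm_of_nonneg htn.le] at hn
  linarith [h n, le_abs_self (C * w n), Real.norm_eq_abs (C * w n)]

lemma mul_norm_coeff_mul_le (f g : ℂ⟦X⟧) (n : ℕ) :
    w n * ‖coeff n (f * g)‖ ≤
      ∑ kl ∈ antidiagonal n, (w kl.1 * ‖coeff kl.1 f‖) * (w kl.2 * ‖coeff kl.2 g‖) := by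
  rw [coeff_mul]
  calc w n * ‖∑ kl ∈ antidiagonal n, coeff kl.1 f * coeff kl.2 g‖
      ≤ w n * ∑ kl ∈ antidiagonal n, ‖coeff kl.1 f * coeff kl.2 g‖ :=
        mul_le_mul_of_nonneg_left (norm_sum_le _ _) (w.pos n).le
    _ = ∑ kl ∈ antidiagonal n, w (kl.1 + kl.2) * (‖coeff kl.1 f‖ * ‖coeff kl.2 g‖) := by
        rw [mul_sum]
        refine sum_congr rfl fun kl hkl => ?_
        rw [mem_antidiagonal.mp hkl, norm_mul]
    _ ≤ _ := sum_le_sum fun kl _ => by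
        nlinarith [w.map_add_le kl.1 kl.2, mul_nonneg (norm_nonneg (coeff kl.1 f))
          (norm_nonneg (coeff kl.2 g))]

lemma hasSum_sum_antidiagonal {f g : ℂ⟦X⟧}
    (hf : Summable fun n => w n * ‖coeff n f‖) (hg : Summable fun n => w n * ‖coeff n g‖) :
    HasSum (fun n =>
      ∑ kl ∈ antidiagonal n, (w kl.1 * ‖coeff kl.1 f‖) * (w kl.2 * ‖coeff kl.2 g‖))
      ((∑' n, w n * ‖coeff n f‖) * ∑' n, w n * ‖coeff n g‖) := by
  have hnorm {u : ℕ → ℝ} (hu : Summable u) : Summable fun n => ‖u n‖ := by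
    simpa only [Real.norm_eq_abs] using hu.abs
  have hsum := (summable_norm_sum_mul_antidiagonal_of_summable_norm (hnorm hf) (hnorm hg)).congr
    fun n => Real.norm_of_nonneg <| sum_nonneg fun kl _ =>
      mul_nonneg (w.mul_norm_nonneg _ _) (w.mul_norm_nonneg _ _)
  exact hsum.hasSum_iff.2
    (tsum_mul_tsum_eq_tsum_sum_antidiagonal_of_summable_norm (hnorm hf) (hnorm hg)).symm

def l1 : Subalgebra ℂ ℂ⟦X⟧ where
  carrier := {f | Summable fun n => w n * ‖coeff n f‖}
  add_mem' {f g} hf hg := (hf.add hg).of_nonneg_of_le (fun n => w.mul_norm_nonneg n _)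
    fun n => by
      rw [map_add, ← mul_add]
      exact mul_le_mul_of_nonneg_left (norm_add_le _ _) (w.pos n).le
  mul_mem' hf hg := (w.hasSum_sum_antidiagonal hf hg).summable.of_nonneg_of_le
    (fun n => w.mul_norm_nonneg n _) (w.mul_norm_coeff_mul_le _ _)
  algebraMap_mem' c := summable_of_ne_finset_zero (s := {0}) fun n hn => by
    simp [coeff_C, Finset.mem_singleton.not.mp hn]

variable {w}

lemma mem_l1 {f : ℂ⟦X⟧} : f ∈ w.l1 ↔ Summable fun n => w n * ‖coeff n f‖ := Iff.rfl

lemma X_mul_mem_l1_iff {f : ℂ⟦X⟧} :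
    PowerSeries.X * f ∈ w.l1 ↔ Summable fun n => w (n + 1) * ‖coeff n f‖ := by
  rw [mem_l1, ← summable_nat_add_iff 1]
  simp only [coeff_succ_X_mul]

namespace l1

noncomputable def toLp : w.l1 →ₗ[ℂ] lp (fun _ : ℕ => ℂ) 1 where
  toFun f := ⟨fun n => (w n : ℂ) * coeff n (f : ℂ⟦X⟧),
    memℓp_one_iff_summable.2 (by simpa only [norm_ofReal_mul] using mem_l1.1 f.2)⟩
  map_add' f g := lp.ext <| funext fun n => by simp [mul_add]; rfl
  map_smul' c f := lp.ext <| funext fun n => by simp [mul_left_comm]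

lemma toLp_apply (f : w.l1) (n : ℕ) : toLp f n = (w n : ℂ) * coeff n (f : ℂ⟦X⟧) := rfl

lemma toLp_injective : Function.Injective (toLp (w := w)) := by
  intro f g h
  ext n : 2
  simpa [toLp_apply, (w.pos n).ne'] using congr_fun (congr_arg (⇑) h) n

lemma toLp_surjective : Function.Surjective (toLp (w := w)) := by
  intro g
  have hmem : PowerSeries.mk (fun n => g n / (w n : ℂ)) ∈ w.l1 := by
    refine mem_l1.2 ((memℓp_one_iff_summable.1 g.2).congr fun n => ?_)
    rw [coeff_mk, norm_div, Complex.norm_real, Real.norm_of_nonneg (w.pos n).le,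
      mul_div_cancel₀ _ (w.pos n).ne']
  refine ⟨⟨_, hmem⟩, lp.ext <| funext fun n => ?_⟩
  simp [toLp_apply, mul_div_cancel₀, (w.pos n).ne']

noncomputable instance : NormedAddCommGroup w.l1 :=
  NormedAddCommGroup.induced _ _ toLp toLp_injective

lemma norm_def (f : w.l1) : ‖f‖ = ∑' n, w n * ‖coeff n (f : ℂ⟦X⟧)‖ := by
  change ‖toLp f‖ = _
  simp only [lp.norm_eq_tsum_rpow (p := 1) (by simp), ENNReal.toReal_one, Real.rpow_one,
    div_one, toLp_apply, norm_ofReal_mul]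

noncomputable instance : NormedCommRing w.l1 :=
  { (inferInstance : NormedAddCommGroup w.l1), (inferInstance : CommRing w.l1) with
    norm_mul_le f g := by
      simp only [norm_def]
      exact hasSum_le (fun n => w.mul_norm_coeff_mul_le f g n) (mem_l1.1 (f * g).2).hasSum
        (w.hasSum_sum_antidiagonal f.2 g.2) }

noncomputable instance : NormedAlgebra ℂ w.l1 where
  norm_smul_le c f := by
    change ‖toLp (c • f)‖ ≤ ‖c‖ * ‖toLp f‖
    rw [map_smul]
    exact norm_smul_le c _

noncomputable def toLpEquiv : w.l1 ≃ₗᵢ[ℂ] lp (fun _ : ℕ => ℂ) 1 where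
  toLinearEquiv := LinearEquiv.ofBijective toLp ⟨toLp_injective, toLp_surjective⟩
  norm_map' _ := rfl

instance : CompleteSpace w.l1 := toLpEquiv.toIsometryEquiv.completeSpace

noncomputable def X : w.l1 :=
  ⟨PowerSeries.X, summable_of_ne_finset_zero (s := {1}) fun n hn => by
    simp [coeff_X, Finset.mem_singleton.not.mp hn]⟩

lemma coe_smul_X_pow (c : ℂ) (n : ℕ) :
    ((c • X ^ n : w.l1) : ℂ⟦X⟧) = c • PowerSeries.X ^ n := rfl

lemma toLp_smul_X_pow (c : ℂ) (n : ℕ) :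
    toLp (c • X ^ n : w.l1) = lp.single 1 n ((w n : ℂ) * c) := by
  refine lp.ext <| funext fun m => ?_
  rw [toLp_apply, coe_smul_X_pow, coeff_smul, coeff_X_pow]
  by_cases hmn : m = n
  · subst hmn; simp
  · simp [hmn]

lemma norm_X_pow (n : ℕ) : ‖(X ^ n : w.l1)‖ = w n := by
  change ‖toLp (X ^ n : w.l1)‖ = w n
  rw [← one_smul ℂ (X ^ n), toLp_smul_X_pow, lp.norm_single one_pos, mul_one, Complex.norm_real,
    Real.norm_of_nonneg (w.pos n).le]

lemma hasSum_coeff_smul_X_pow (f : w.l1) :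
    HasSum (fun n => coeff n (f : ℂ⟦X⟧) • X ^ n) f := by
  rw [← toLpEquiv.toContinuousLinearEquiv.hasSum']
  convert lp.hasSum_single ENNReal.one_ne_top (toLpEquiv f) using 2 with n
  · exact toLp_smul_X_pow _ n
  · rfl

/-- Outside the closed unit disk the series may diverge, and then `tsum` returns `0`. -/
noncomputable def eval (z : ℂ) (f : w.l1) : ℂ := ∑' n, coeff n (f : ℂ⟦X⟧) * z ^ n

variable {z : ℂ}

lemma summable_norm_coeff_mul_pow (hz : ‖z‖ ≤ 1) (f : w.l1) :
    Summable fun n => ‖coeff n (f : ℂ⟦X⟧) * z ^ n‖ := by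
  refine (mem_l1.1 f.2).of_nonneg_of_le (fun n => norm_nonneg _) fun n => ?_
  rw [norm_mul, norm_pow]
  calc ‖coeff n (f : ℂ⟦X⟧)‖ * ‖z‖ ^ n ≤ 1 * ‖coeff n (f : ℂ⟦X⟧)‖ := by
        rw [one_mul]
        exact mul_le_of_le_one_right (norm_nonneg _) (pow_le_one₀ (norm_nonneg z) hz)
    _ ≤ w n * ‖coeff n (f : ℂ⟦X⟧)‖ := by gcongr; exact w.one_le n

lemma eval_mul (hz : ‖z‖ ≤ 1) (f g : w.l1) : eval z (f * g) = eval z f * eval z g := by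
  rw [eval, eval, eval, tsum_mul_tsum_eq_tsum_sum_antidiagonal_of_summable_norm
    (summable_norm_coeff_mul_pow hz f) (summable_norm_coeff_mul_pow hz g)]
  refine tsum_congr fun n => ?_
  rw [Subalgebra.coe_mul, coeff_mul, sum_mul]
  refine sum_congr rfl fun kl hkl => ?_
  rw [← mem_antidiagonal.mp hkl, pow_add]
  ring

lemma eval_one (z : ℂ) : eval z (1 : w.l1) = 1 := by
  rw [eval, tsum_eq_single 0 fun n hn => by simp [coeff_one, hn]]
  simp

lemma eval_units_inv (hz : ‖z‖ ≤ 1) (u : (w.l1)ˣ) :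
    eval z (↑u⁻¹ : w.l1) = (eval z (u : w.l1))⁻¹ :=
  eq_inv_of_mul_eq_one_left <| by rw [← eval_mul hz, Units.inv_mul, eval_one]

lemma eval_eq_coeff_zero_add (hz : ‖z‖ ≤ 1) (f : w.l1) :
    eval z f = coeff 0 (f : ℂ⟦X⟧) + ∑' n, coeff (n + 1) (f : ℂ⟦X⟧) * z ^ (n + 1) := by
  rw [eval, (summable_norm_coeff_mul_pow hz f).of_norm.tsum_eq_zero_add, pow_zero, mul_one]

open WeakDual

lemma character_apply_eq_eval (φ : characterSpace ℂ w.l1) (f : w.l1) : φ f = eval (φ X) f := by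
  rw [← ((hasSum_coeff_smul_X_pow f).map φ (map_continuous φ)).tsum_eq, eval]
  simp only [Function.comp_apply, map_smul, map_pow, smul_eq_mul]

lemma norm_character_apply_X_le_one (hw : w.IsGRS) (φ : characterSpace ℂ w.l1) :
    ‖φ X‖ ≤ 1 :=
  hw.le_one_of_forall_pow_le (C := ‖(1 : w.l1)‖) fun n => by
    rw [← norm_pow, ← map_pow, mul_comm, ← norm_X_pow]
    exact spectrum.norm_le_norm_mul_of_mem (CharacterSpace.apply_mem_spectrum φ _)

theorem isUnit_of_forall_eval_ne_zero (hw : w.IsGRS) {f : w.l1}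
    (hf : ∀ z : ℂ, ‖z‖ ≤ 1 → eval z f ≠ 0) : IsUnit f := by
  by_contra hnu
  obtain ⟨φ, hφ⟩ := CharacterSpace.exists_apply_eq_zero hnu
  exact hf _ (norm_character_apply_X_le_one hw φ) (character_apply_eq_eval φ f ▸ hφ)

end l1

end SubmultiplicativeWeight

noncomputable def rpowWeight (r : ℝ) (hr : 0 ≤ r) : SubmultiplicativeWeight where
  toFun n := (1 + n : ℝ) ^ r
  one_le' n := Real.one_le_rpow (by simp) hr
  map_add_le' m n := by
    rw [← Real.mul_rpow (by positivity) (by positivity)]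
    gcongr
    push_cast
    nlinarith [(m.cast_nonneg : (0 : ℝ) ≤ m), (n.cast_nonneg : (0 : ℝ) ≤ n)]

lemma rpowWeight_apply (r : ℝ) (hr : 0 ≤ r) (n : ℕ) :
    rpowWeight r hr n = (1 + n : ℝ) ^ r := rfl

lemma isGRS_rpowWeight (r : ℝ) (hr : 0 ≤ r) : (rpowWeight r hr).IsGRS := by
  intro t ht
  have hshift : (fun n : ℕ => t ^ (n + 1)) =O[atTop] fun n => t ^ n := by
    simpa [pow_succ'] using (isBigO_refl (fun n : ℕ => t ^ n) atTop).const_mul_left t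
  have hpoly : (fun n : ℕ => ((n + 1 : ℕ) : ℝ) ^ ⌈r⌉₊) =o[atTop] fun n => t ^ n :=
    ((isLittleO_pow_const_const_pow_of_one_lt ⌈r⌉₊ ht).comp_tendsto
      (tendsto_add_atTop_nat 1)).trans_isBigO hshift
  refine IsBigO.trans_isLittleO (IsBigO.of_bound 1 (Eventually.of_forall fun n => ?_)) hpoly
  rw [rpowWeight_apply, one_mul, Real.norm_of_nonneg (by positivity),
    Real.norm_of_nonneg (by positivity), ← Real.rpow_natCast, Nat.cast_add, Nat.cast_one,
    add_comm (n : ℝ)]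
  exact Real.rpow_le_rpow_of_exponent_le (by linarith [n.cast_nonneg' (α := ℝ)]) (Nat.le_ceil r)

open SubmultiplicativeWeight l1 in
/-- Weighted Wiener lemma: if `A(z) = 1 - ∑_{j≥1} a_j z^j` has weighted-summable
coefficients and no zeros in the closed unit disk, then `1/A(z) = 1 + ∑_{j≥1} α_j z^j`
with weighted-summable coefficients `α_j`.  (Here `a j` stands for `a_{j+1}`.) -/
theorem weighted_wiener_lemma (r : ℝ) (hr : 0 ≤ r) (a : ℕ → ℂ)
    (ha : Summable fun j : ℕ => ((1 : ℝ) + (j + 1)) ^ r * ‖a j‖)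
    (hA : ∀ z : ℂ, ‖z‖ ≤ 1 → (1 - ∑' j : ℕ, a j * z ^ (j + 1)) ≠ 0) :
    ∃ α : ℕ → ℂ,
      (Summable fun j : ℕ => ((1 : ℝ) + (j + 1)) ^ r * ‖α j‖) ∧
      ∀ z : ℂ, ‖z‖ ≤ 1 →
        (1 - ∑' j : ℕ, a j * z ^ (j + 1))⁻¹ = 1 + ∑' j : ℕ, α j * z ^ (j + 1) := by
  have hw_succ (n : ℕ) : rpowWeight r hr (n + 1) = ((1 : ℝ) + (n + 1)) ^ r := by
    rw [rpowWeight_apply]; push_cast; rfl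
  let A : (rpowWeight r hr).l1 := ⟨1 - PowerSeries.X * PowerSeries.mk a,
    sub_mem (one_mem _) (X_mul_mem_l1_iff.2 (by simpa only [hw_succ, coeff_mk] using ha))⟩
  have hA_eval (z : ℂ) (hz : ‖z‖ ≤ 1) : eval z A = 1 - ∑' j, a j * z ^ (j + 1) := by
    simp [eval_eq_coeff_zero_add hz, A, coeff_succ_X_mul, tsum_neg, sub_eq_add_neg]
  obtain ⟨u, hu⟩ := isUnit_of_forall_eval_ne_zero (isGRS_rpowWeight r hr)
    fun z hz => hA_eval z hz ▸ hA z hz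
  have hcoeff_zero : coeff 0 ((↑u⁻¹ : (rpowWeight r hr).l1) : ℂ⟦X⟧) = 1 := by
    have h := eval_units_inv (z := 0) (by simp) u
    rw [hu, hA_eval 0 (by simp), eval_eq_coeff_zero_add (by simp)] at h
    simpa using h
  refine ⟨fun j => coeff (j + 1) ((↑u⁻¹ : (rpowWeight r hr).l1) : ℂ⟦X⟧), ?_,
    fun z hz => ?_⟩
  · simpa only [hw_succ] using
      (summable_nat_add_iff 1).2 (mem_l1.1 (↑u⁻¹ : (rpowWeight r hr).l1).2)
  · rw [← hA_eval z hz, ← hu, ← eval_units_inv hz, eval_eq_coeff_zero_add hz, hcoeff_zero]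
end

section
/- Let A_p(z) = 1 - Σ_{k=1}^p a_k(p) z^k and Â_p(z) = 1 - Σ_{k=1}^p â_k(p) z^k be polynomials with no zeros in the closed disk of radius 1 + 1/p, and let δ > 0 be a lower bound for |A_p(z) Â_p(z)| on the circle |z| = 1 + 1/p. Then the Taylor coefficients of the reciprocals satisfy |α̂_k(p) - α_k(p)| ≤ (1+1/p)^{-k} · δ^{-1} · (1+1/p)^p · Σ_{j=1}^p |â_j(p) - a_j(p)| for all k ≥ 0. -/
/-!
With `r = 1 + 1/p`, the function `Â⁻¹ - A⁻¹ = (A - Â) / (A Â)` is continuous on the closed disk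
`|z| ≤ r` and its Taylor coefficients at `0` are `α̂_k - α_k`. On the circle `|z| = r` the
numerator is at most `r ^ p ∑ |â_j - a_j|` (because `r ≥ 1`) and the denominator at least `δ`, so
Cauchy's estimate bounds the `k`-th coefficient by that quotient times `r ^ (-k)`.
-/

open Finset Metric

theorem hasFPowerSeriesOnBall_ofScalars_of_hasSum {f : ℂ → ℂ} {c : ℕ → ℂ} {R : NNReal}
    (hR : 0 < R) (hf : ∀ z ∈ ball (0 : ℂ) R, HasSum (fun n ↦ c n * z ^ n) (f z)) :
    HasFPowerSeriesOnBall f (FormalMultilinearSeries.ofScalars ℂ c) 0 R where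
  r_le := by
    refine ENNReal.le_of_forall_pos_nnreal_lt fun r _ hr ↦ ?_
    have hr' : ((r : ℝ) : ℂ) ∈ ball (0 : ℂ) R := by
      simpa [abs_of_nonneg r.coe_nonneg] using hr
    refine FormalMultilinearSeries.le_radius_of_tendsto _ (l := 0) ?_
    simpa [FormalMultilinearSeries.ofScalars_norm, abs_of_nonneg r.coe_nonneg] using
      (hf _ hr').summable.tendsto_atTop_zero.norm
  r_pos := by exact_mod_cast hR
  hasSum {y} hy := by
    rw [eball_coe] at hy
    simpa [FormalMultilinearSeries.ofScalars_apply_eq, mul_comm] using hf y hy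

theorem norm_coeff_le_of_hasSum_of_forall_mem_sphere_norm_le {f : ℂ → ℂ} {c : ℕ → ℂ} {R M : ℝ}
    (hR : 0 < R) (hf : ContinuousOn f (closedBall 0 R))
    (hsum : ∀ z ∈ ball (0 : ℂ) R, HasSum (fun n ↦ c n * z ^ n) (f z))
    (hM : ∀ z ∈ sphere (0 : ℂ) R, ‖f z‖ ≤ M) (n : ℕ) : ‖c n‖ ≤ M / R ^ n := by
  lift R to NNReal using hR.le
  have hps := hasFPowerSeriesOnBall_ofScalars_of_hasSum (mod_cast hR) hsum
  have hdiff : DiffContOnCl ℂ f (ball 0 R) :=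
    .mk_ball (by simpa using hps.differentiableOn) hf
  have hcoeff : iteratedDeriv n f 0 = n.factorial * c n := by
    have htaylor := hps.analyticAt.hasFPowerSeriesAt
    have hn := congrFun (FormalMultilinearSeries.ofScalars_series_injective ℂ ℂ
      (htaylor.eq_formalMultilinearSeries hps.hasFPowerSeriesAt)) n
    rw [← hn, mul_div_cancel₀ _ (by exact_mod_cast n.factorial_ne_zero)]
  have hcauchy := Complex.norm_iteratedDeriv_le_of_forall_mem_sphere_norm_le n hR hdiff hM
  rw [hcoeff, norm_mul, Complex.norm_natCast, mul_div_assoc] at hcauchy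
  exact le_of_mul_le_mul_left hcauchy (by positivity)

theorem norm_sum_mul_pow_le_pow_mul_sum {𝕜 : Type*} [NormedField 𝕜] {s : Finset ℕ} {N : ℕ}
    (hs : ∀ j ∈ s, j ≤ N) (b : ℕ → 𝕜) {z : 𝕜} {r : ℝ} (hr : 1 ≤ r) (hz : ‖z‖ ≤ r) :
    ‖∑ j ∈ s, b j * z ^ j‖ ≤ r ^ N * ∑ j ∈ s, ‖b j‖ := by
  rw [mul_sum]
  refine (norm_sum_le _ _).trans (sum_le_sum fun j hj ↦ ?_)
  rw [norm_mul, norm_pow, mul_comm]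
  gcongr
  calc ‖z‖ ^ j ≤ r ^ j := by gcongr
    _ ≤ r ^ N := pow_le_pow_right₀ hr (hs j hj)

theorem norm_inv_sub_inv_le {𝕜 : Type*} [NormedField 𝕜] {a b : 𝕜} {δ ε : ℝ} (hδ : 0 < δ)
    (hab : δ ≤ ‖a * b‖) (h : ‖a - b‖ ≤ ε) : ‖b⁻¹ - a⁻¹‖ ≤ ε / δ := by
  have hab₀ : a * b ≠ 0 := norm_pos_iff.mp (hδ.trans_le hab)
  rw [inv_sub_inv (right_ne_zero_of_mul hab₀) (left_ne_zero_of_mul hab₀), mul_comm, norm_div]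
  exact div_le_div₀ ((norm_nonneg _).trans h) h hδ hab

theorem inverse_coefficients_difference_bound_general (p : ℕ)
    (a ahat : ℕ → ℂ) (A Ahat : ℂ → ℂ)
    (hA : ∀ z : ℂ, A z = 1 - ∑ k ∈ Finset.Icc 1 p, a k * z ^ k)
    (hAhat : ∀ z : ℂ, Ahat z = 1 - ∑ k ∈ Finset.Icc 1 p, ahat k * z ^ k)
    (hAne : ∀ z : ℂ, ‖z‖ ≤ 1 + 1 / (p : ℝ) → A z ≠ 0)
    (hAhatne : ∀ z : ℂ, ‖z‖ ≤ 1 + 1 / (p : ℝ) → Ahat z ≠ 0)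
    (δ : ℝ) (hδ : 0 < δ)
    (hδle : ∀ z : ℂ, ‖z‖ = 1 + 1 / (p : ℝ) → δ ≤ ‖A z * Ahat z‖)
    (α αhat : ℕ → ℂ)
    (hαsum : ∀ z : ℂ, ‖z‖ ≤ 1 + 1 / (p : ℝ) →
      HasSum (fun j : ℕ => α j * z ^ j) (A z)⁻¹)
    (hαhatsum : ∀ z : ℂ, ‖z‖ ≤ 1 + 1 / (p : ℝ) →
      HasSum (fun j : ℕ => αhat j * z ^ j) (Ahat z)⁻¹) :
    ∀ k : ℕ, ‖αhat k - α k‖ ≤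
      (1 + 1 / (p : ℝ)) ^ (-(k : ℤ)) * δ⁻¹ * (1 + 1 / (p : ℝ)) ^ p *
        ∑ j ∈ Finset.Icc 1 p, ‖ahat j - a j‖ := by
  intro k
  set r : ℝ := 1 + 1 / (p : ℝ)
  set S := ∑ j ∈ Finset.Icc 1 p, ‖ahat j - a j‖
  have hr : 1 ≤ r := le_add_of_nonneg_right (by positivity)
  have hAcont : Continuous A := by rw [funext hA]; fun_prop
  have hAhatcont : Continuous Ahat := by rw [funext hAhat]; fun_prop
  have hcont : ContinuousOn (fun z ↦ (Ahat z)⁻¹ - (A z)⁻¹) (closedBall 0 r) :=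
    (hAhatcont.continuousOn.inv₀ fun z hz ↦ hAhatne z (mem_closedBall_zero_iff.mp hz)).sub
      (hAcont.continuousOn.inv₀ fun z hz ↦ hAne z (mem_closedBall_zero_iff.mp hz))
  have hsum (z : ℂ) (hz : z ∈ ball 0 r) :
      HasSum (fun n ↦ (αhat n - α n) * z ^ n) ((Ahat z)⁻¹ - (A z)⁻¹) := by
    have hz' := (mem_ball_zero_iff.mp hz).le
    simpa only [sub_mul] using (hαhatsum z hz').sub (hαsum z hz')
  have hbound (z : ℂ) (hz : z ∈ sphere 0 r) : ‖(Ahat z)⁻¹ - (A z)⁻¹‖ ≤ r ^ p * S / δ := by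
    rw [mem_sphere_zero_iff_norm] at hz
    refine norm_inv_sub_inv_le hδ (hδle z hz) ?_
    have hdiff : A z - Ahat z = ∑ j ∈ Icc 1 p, (ahat j - a j) * z ^ j := by
      simp only [hA, hAhat, sub_mul, sum_sub_distrib]; ring
    rw [hdiff]
    exact norm_sum_mul_pow_le_pow_mul_sum (fun j hj ↦ (mem_Icc.mp hj).2) _ hr hz.le
  calc ‖αhat k - α k‖ ≤ r ^ p * S / δ / r ^ k :=
        norm_coeff_le_of_hasSum_of_forall_mem_sphere_norm_le (by positivity) hcont hsum hbound k
    _ = r ^ (-(k : ℤ)) * δ⁻¹ * r ^ p * S := by rw [zpow_neg, zpow_natCast]; ring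

/-- Comparison of Taylor coefficients of reciprocals of two polynomials without zeros
in the closed disk of radius `1 + 1/p`: if `δ > 0` bounds `|A_p(z) Â_p(z)|` from below
on the circle `|z| = 1 + 1/p`, then
`|α̂_k(p) - α_k(p)| ≤ (1+1/p)^{-k} · δ⁻¹ · (1+1/p)^p · ∑_{j=1}^p |â_j(p) - a_j(p)|`. -/
theorem inverse_coefficients_difference_bound (p : ℕ) (hp : 1 ≤ p)
    (a ahat : ℕ → ℂ) (A Ahat : ℂ → ℂ)
    (hA : ∀ z : ℂ, A z = 1 - ∑ k ∈ Finset.Icc 1 p, a k * z ^ k)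
    (hAhat : ∀ z : ℂ, Ahat z = 1 - ∑ k ∈ Finset.Icc 1 p, ahat k * z ^ k)
    (hAne : ∀ z : ℂ, ‖z‖ ≤ 1 + 1 / (p : ℝ) → A z ≠ 0)
    (hAhatne : ∀ z : ℂ, ‖z‖ ≤ 1 + 1 / (p : ℝ) → Ahat z ≠ 0)
    (δ : ℝ) (hδ : 0 < δ)
    (hδle : ∀ z : ℂ, ‖z‖ = 1 + 1 / (p : ℝ) → δ ≤ ‖A z * Ahat z‖)
    (α αhat : ℕ → ℂ)
    (hαsum : ∀ z : ℂ, ‖z‖ ≤ 1 + 1 / (p : ℝ) →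
      HasSum (fun j : ℕ => α j * z ^ j) (A z)⁻¹)
    (hαhatsum : ∀ z : ℂ, ‖z‖ ≤ 1 + 1 / (p : ℝ) →
      HasSum (fun j : ℕ => αhat j * z ^ j) (Ahat z)⁻¹) :
    ∀ k : ℕ, ‖αhat k - α k‖ ≤
      (1 + 1 / (p : ℝ)) ^ (-(k : ℤ)) * δ⁻¹ * (1 + 1 / (p : ℝ)) ^ p *
        ∑ j ∈ Finset.Icc 1 p, ‖ahat j - a j‖ :=
  inverse_coefficients_difference_bound_general p a ahat A Ahat hA hAhat hAne hAhatne δ hδ hδle α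
    αhat hαsum hαhatsum
end

section
/- Let z_k be complex numbers with 1 < |z_k| ≤ 1 + 1/p(k) where p(k) → ∞, and suppose z_k → z_0 (necessarily |z_0| = 1). Let (a_j) satisfy Σ_j |a_j| < ∞ and Σ_{j=1}^{p} |a_j(p) - a_j| → 0 as p → ∞. If A_{p(k)}(z_k) → 0, then A(z_0) = 0, where A_p(z) = 1 - Σ_{j=1}^p a_j(p) z^j and A(z) = 1 - Σ_{j=1}^∞ a_j z^j. -/
/-!
Split `A_{p(k)}(z_k)` as `1 - ∑_{j ≤ p(k)} (a_j(p(k)) - a_j) z_k^j - ∑_{j ≤ p(k)} a_j z_k^j`.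
For `j ≤ p(k)` we have `|z_k|^j ≤ (1 + 1/p(k))^{p(k)} ≤ e`, so the first sum is at most
`e ∑_{j ≤ p(k)} |a_j(p(k)) - a_j| → 0`, and the second converges to `∑_j a_j z_0^j` by dominated
convergence with the summable bound `e |a_j|`. Hence `A_{p(k)}(z_k) → A(z_0)`, which must be `0`.
-/

open Filter Finset Topology

lemma pow_le_exp_one_of_le_one_add_inv {n m : ℕ} {r : ℝ} (hr0 : 0 ≤ r)
    (hr : r ≤ 1 + (n : ℝ)⁻¹) (hmn : m ≤ n) : r ^ m ≤ Real.exp 1 :=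
  calc r ^ m ≤ (1 + (n : ℝ)⁻¹) ^ m := pow_le_pow_left₀ hr0 hr m
    _ ≤ (1 + (n : ℝ)⁻¹) ^ n :=
      pow_le_pow_right₀ (le_add_of_nonneg_right (by positivity)) hmn
    _ ≤ Real.exp 1 := Real.one_add_inv_pow_le_exp

section TruncatedSums

variable {ι E : Type*} {l : Filter ι} {p : ι → ℕ}

lemma tendsto_sum_range_of_dominated_convergence [NormedAddCommGroup E] [CompleteSpace E]
    {f : ι → ℕ → E} {g : ℕ → E} {bound : ℕ → ℝ} (hp : Tendsto p l atTop)
    (h_sum : Summable bound) (hfg : ∀ j, Tendsto (f · j) l (𝓝 (g j)))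
    (h_bound : ∀ k, ∀ j < p k, ‖f k j‖ ≤ bound j) :
    Tendsto (fun k => ∑ j ∈ range (p k), f k j) l (𝓝 (∑' j, g j)) := by
  have h_trunc : ∀ k, ∑' j, (if j < p k then f k j else 0) = ∑ j ∈ range (p k), f k j := by
    intro k
    rw [tsum_eq_sum (s := range (p k)) fun j hj => by simp_all]
    exact sum_congr rfl fun j hj => by simp_all
  refine (tendsto_tsum_of_dominated_convergence h_sum.abs (fun j => ?_) ?_).congr h_trunc
  · refine (hfg j).congr' ?_
    filter_upwards [hp.eventually_gt_atTop j] with k hk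
    simp [hk]
  · refine Eventually.of_forall fun k j => ?_
    split_ifs with hj
    · exact (h_bound k j hj).trans (le_abs_self _)
    · simp

lemma tendsto_sum_range_mul_zero_of_bounded [NormedRing E] {c w : ι → ℕ → E} {C : ℝ}
    (hc : Tendsto (fun k => ∑ j ∈ range (p k), ‖c k j‖) l (𝓝 0))
    (hw : ∀ k, ∀ j < p k, ‖w k j‖ ≤ C) :
    Tendsto (fun k => ∑ j ∈ range (p k), c k j * w k j) l (𝓝 0) := by
  have h_le : ∀ k, ‖∑ j ∈ range (p k), c k j * w k j‖ ≤ C * ∑ j ∈ range (p k), ‖c k j‖ := by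
    intro k
    calc ‖∑ j ∈ range (p k), c k j * w k j‖ ≤ ∑ j ∈ range (p k), ‖c k j‖ * C :=
          norm_sum_le_of_le _ fun j hj => norm_mul_le_of_le le_rfl (hw k j (mem_range.mp hj))
      _ = C * ∑ j ∈ range (p k), ‖c k j‖ := by rw [← sum_mul, mul_comm]
  refine squeeze_zero_norm h_le ?_
  simpa using hc.const_mul C

end TruncatedSums

theorem limit_point_is_zero_of_A_general
    (a : ℕ → ℂ) (ap : ℕ → ℕ → ℂ)
    (ha : Summable fun j : ℕ => ‖a j‖)
    (hconv : Tendsto (fun p : ℕ => ∑ j ∈ Finset.range p, ‖ap p j - a j‖) atTop (nhds 0))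
    (p : ℕ → ℕ) (hp : Tendsto p atTop atTop)
    (z : ℕ → ℂ) (z0 : ℂ)
    (hz2 : ∀ k, ‖z k‖ ≤ 1 + 1 / (p k : ℝ))
    (hzconv : Tendsto z atTop (nhds z0))
    (hApz : Tendsto
      (fun k : ℕ => 1 - ∑ j ∈ Finset.range (p k), ap (p k) j * (z k) ^ (j + 1))
      atTop (nhds 0)) :
    1 - ∑' j : ℕ, a j * z0 ^ (j + 1) = 0 := by
  have h_pow : ∀ k, ∀ j < p k, ‖z k ^ (j + 1)‖ ≤ Real.exp 1 := fun k j hj => by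
    rw [norm_pow]
    exact pow_le_exp_one_of_le_one_add_inv (norm_nonneg _) (by simpa using hz2 k) hj
  have h_err : Tendsto (fun k => ∑ j ∈ range (p k), (ap (p k) j - a j) * z k ^ (j + 1))
      atTop (𝓝 0) :=
    tendsto_sum_range_mul_zero_of_bounded (hconv.comp hp) h_pow
  have h_main : Tendsto (fun k => ∑ j ∈ range (p k), a j * z k ^ (j + 1))
      atTop (𝓝 (∑' j, a j * z0 ^ (j + 1))) :=
    tendsto_sum_range_of_dominated_convergence hp (ha.mul_left (Real.exp 1))
      (fun j => tendsto_const_nhds.mul (hzconv.pow (j + 1)))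
      fun k j hj => (norm_mul_le_of_le le_rfl (h_pow k j hj)).trans_eq (mul_comm _ _)
  have h_sum : Tendsto (fun k => ∑ j ∈ range (p k), ap (p k) j * z k ^ (j + 1))
      atTop (𝓝 (∑' j, a j * z0 ^ (j + 1))) := by
    simpa only [zero_add, ← sum_add_distrib, ← add_mul, sub_add_cancel] using h_err.add h_main
  exact tendsto_nhds_unique (tendsto_const_nhds.sub h_sum) hApz

/-- Key limiting argument of Lemma 3: if `1 < |z_k| ≤ 1 + 1/p(k)`, `p(k) → ∞`,
`z_k → z_0`, the coefficients satisfy `∑ |a_j| < ∞` and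
`∑_{j=1}^p |a_j(p) - a_j| → 0`, and `A_{p(k)}(z_k) → 0`, then `A(z_0) = 0`.
(Here `a j` stands for `a_{j+1}`, and `ap p j` for `a_{j+1}(p)`.) -/
theorem limit_point_is_zero_of_A
    (a : ℕ → ℂ) (ap : ℕ → ℕ → ℂ)
    (ha : Summable fun j : ℕ => ‖a j‖)
    (hconv : Tendsto (fun p : ℕ => ∑ j ∈ Finset.range p, ‖ap p j - a j‖) atTop (nhds 0))
    (p : ℕ → ℕ) (hp : Tendsto p atTop atTop)
    (z : ℕ → ℂ) (z0 : ℂ)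
    (hz1 : ∀ k, 1 < ‖z k‖) (hz2 : ∀ k, ‖z k‖ ≤ 1 + 1 / (p k : ℝ))
    (hzconv : Tendsto z atTop (nhds z0))
    (hApz : Tendsto
      (fun k : ℕ => 1 - ∑ j ∈ Finset.range (p k), ap (p k) j * (z k) ^ (j + 1))
      atTop (nhds 0)) :
    1 - ∑' j : ℕ, a j * z0 ^ (j + 1) = 0 :=
  limit_point_is_zero_of_A_general a ap ha hconv p hp z z0 hz2 hzconv hApz
end
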